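/- The Apéry set of S is β-rectangular (Ap(S) = B) if and only if m = Π_{i=2}^ν (β_i + 1). -/

import Mathlib

open Finset

/-- `S` is a numerical semigroup: a submonoid of `(ℕ, +)` with finite complement. -/
def IsNumSgp (S : Set ℕ) : Prop :=
  0 ∈ S ∧ (∀ a ∈ S, ∀ b ∈ S, a + b ∈ S) ∧ (Sᶜ : Set ℕ).Finite

/-- `s` belongs to the Apéry set of `S` with respect to `m`:
`s ∈ S` and `s - m ∉ S` (i.e. no `u ∈ S` with `u + m = s`). -/
def InApery (S : Set ℕ) (m s : ℕ) : Prop :=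
  s ∈ S ∧ ∀ u ∈ S, u + m ≠ s

def AperySet (S : Set ℕ) (m : ℕ) : Set ℕ := {s | InApery S m s}

/-- `ordS S s` is the largest `h` such that `s` is a sum of `h` nonzero elements of `S`. -/
noncomputable def ordS (S : Set ℕ) (s : ℕ) : ℕ :=
  sSup {h : ℕ | ∃ f : Fin h → ℕ, (∀ j, f j ∈ S ∧ f j ≠ 0) ∧ ∑ j, f j = s}

/-- `g` generates `S`. -/
def Generates (S : Set ℕ) {ν : ℕ} (g : Fin ν → ℕ) : Prop :=
  ∀ s, s ∈ S ↔ ∃ lam : Fin ν → ℕ, ∑ i, lam i * g i = s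

/-- `g` is a minimal generating system of `S`: it generates `S`
and no `g i` is generated by the remaining generators. -/
def MinimalGen (S : Set ℕ) {ν : ℕ} (g : Fin ν → ℕ) : Prop :=
  Generates S g ∧ ∀ i, ¬ ∃ lam : Fin ν → ℕ, lam i = 0 ∧ ∑ j, lam j * g j = g i

/-- `lam` is a maximal representation of `s`: the coefficient sum equals `ordS S s`. -/
def IsMaxRep (S : Set ℕ) {ν : ℕ} (g : Fin ν → ℕ) (lam : Fin ν → ℕ) (s : ℕ) : Prop :=
  ∑ i, lam i * g i = s ∧ ∑ i, lam i = ordS S s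

/-- `s` has a unique maximal representation. -/
def UniqueMaxRep (S : Set ℕ) {ν : ℕ} (g : Fin ν → ℕ) (s : ℕ) : Prop :=
  ∃! lam : Fin ν → ℕ, IsMaxRep S g lam s

/-- `β_i = max {h | h g_i ∈ Ap(S) and ord(h g_i) = h}`. -/
noncomputable def betaN (S : Set ℕ) (m : ℕ) {ν : ℕ} (g : Fin ν → ℕ) (i : Fin ν) : ℕ :=
  sSup {h : ℕ | InApery S m (h * g i) ∧ ordS S (h * g i) = h}

/-- `γ_i = max {h | h g_i ∈ Ap(S), ord(h g_i) = h and h g_i has a unique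
maximal representation}`. -/
noncomputable def gammaN (S : Set ℕ) (m : ℕ) {ν : ℕ} (g : Fin ν → ℕ) (i : Fin ν) : ℕ :=
  sSup {h : ℕ | InApery S m (h * g i) ∧ ordS S (h * g i) = h ∧ UniqueMaxRep S g (h * g i)}

/-- `B = {Σ_{i≥2} λ_i g_i : 0 ≤ λ_i ≤ β_i}`. -/
def Bset (S : Set ℕ) (m : ℕ) {ν : ℕ} [NeZero ν] (g : Fin ν → ℕ) : Set ℕ :=
  {s | ∃ lam : Fin ν → ℕ, lam 0 = 0 ∧ (∀ i, lam i ≤ betaN S m g i) ∧ ∑ i, lam i * g i = s}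

/-- `Γ = {Σ_{i≥2} λ_i g_i : 0 ≤ λ_i ≤ γ_i}`. -/
def GammaSet (S : Set ℕ) (m : ℕ) {ν : ℕ} [NeZero ν] (g : Fin ν → ℕ) : Set ℕ :=
  {s | ∃ lam : Fin ν → ℕ, lam 0 = 0 ∧ (∀ i, lam i ≤ gammaN S m g i) ∧ ∑ i, lam i * g i = s}

/-- `s ⪯_M t`. -/
def predM (S : Set ℕ) (s t : ℕ) : Prop :=
  ∃ u ∈ S, s + u = t ∧ ordS S s + ordS S u = ordS S t

/-!
Every `s ∈ Ap(S)` has a maximal representation `λ`. Since `s - m ∉ S` it does not involve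
`g 0 = m`, and `λ i ≤ β i`: the part `λ i * g i` of a maximal representation is again maximal,
and a summand of an Apéry element is again one. So `Ap(S)` lies in `B`, the image of the box
`λ 0 = 0, λ i ≤ β i`, and `m = #Ap(S) ≤ #B ≤ ∏ (β i + 1)`. Hence `m = ∏ (β i + 1)` forces
`Ap(S) = B`, and conversely `Ap(S) = B` gives the product formula once the box maps injectively.

When `Ap(S) = B`, the corner of the box represents an Apéry element, hence is a maximal
representation, and so is every point of the box. If two points `λ, μ` of the box represent the
same element and `λ i < μ i`, adding `β i - λ i` to the `i`-th coordinate of both gives two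
representations of one element with equally many summands; the first lies in the box, so the
second is a maximal representation of an Apéry element whose `i`-th coordinate exceeds `β i`.
-/


def ordSet (S : Set ℕ) (s : ℕ) : Set ℕ :=
  {h : ℕ | ∃ f : Fin h → ℕ, (∀ j, f j ∈ S ∧ f j ≠ 0) ∧ ∑ j, f j = s}

section ordS

variable {S : Set ℕ} {a b s h : ℕ}

lemma le_of_mem_ordSet (hh : h ∈ ordSet S s) : h ≤ s := by
  obtain ⟨f, hf, rfl⟩ := hh
  simpa using Finset.card_nsmul_le_sum univ f 1 fun j _ => Nat.one_le_iff_ne_zero.2 (hf j).2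

lemma ordS_le (S : Set ℕ) (s : ℕ) : ordS S s ≤ s :=
  csSup_le' fun _ => le_of_mem_ordSet

lemma le_ordS (hh : h ∈ ordSet S s) : h ≤ ordS S s :=
  le_csSup ⟨s, fun _ => le_of_mem_ordSet⟩ hh

lemma ordS_mem_ordSet (hs : s ∈ S) : ordS S s ∈ ordSet S s := by
  refine Nat.sSup_mem ?_ ⟨s, fun _ => le_of_mem_ordSet⟩
  rcases eq_or_ne s 0 with rfl | hs0
  · exact ⟨0, Fin.elim0, fun j => j.elim0, rfl⟩
  · exact ⟨1, fun _ => s, fun _ => ⟨hs, hs0⟩, by simp⟩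

lemma le_ordS_mul (ha : a ∈ S) (ha0 : a ≠ 0) (n : ℕ) : n ≤ ordS S (n * a) :=
  le_ordS ⟨fun _ => a, fun _ => ⟨ha, ha0⟩, by simp⟩

lemma ordS_add_ordS_le (ha : a ∈ S) (hb : b ∈ S) : ordS S a + ordS S b ≤ ordS S (a + b) := by
  obtain ⟨f, hf, hfa⟩ := ordS_mem_ordSet ha
  obtain ⟨f', hf', hfb⟩ := ordS_mem_ordSet hb
  refine le_ordS ⟨Fin.append f f', Fin.addCases (by simpa using hf) (by simpa using hf'), ?_⟩
  simp [Fin.sum_univ_add, hfa, hfb]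

lemma sum_ordS_le_ordS_sum (hS : IsNumSgp S) {ι : Type*} (t : Finset ι) {x : ι → ℕ}
    (hx : ∀ i, x i ∈ S) : ∑ i ∈ t, ordS S (x i) ≤ ordS S (∑ i ∈ t, x i) := by
  classical
  induction t using Finset.induction_on with
  | empty => simp
  | insert i t hi ih =>
    rw [sum_insert hi, sum_insert hi]
    have hmem : ∑ i ∈ t, x i ∈ S :=
      sum_induction x (· ∈ S) (fun a b ha hb => hS.2.1 a ha b hb) hS.1 fun i _ => hx i
    exact (Nat.add_le_add_left ih _).trans (ordS_add_ordS_le (hx i) hmem)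

end ordS

section generators

variable {S : Set ℕ} {ν : ℕ} {g : Fin ν → ℕ} {lam tau : Fin ν → ℕ} {s : ℕ}

lemma Generates.dotProduct_mem (hgen : Generates S g) (lam : Fin ν → ℕ) : lam ⬝ᵥ g ∈ S :=
  (hgen _).2 ⟨lam, rfl⟩

lemma Generates.mul_mem (hgen : Generates S g) (n : ℕ) (i : Fin ν) : n * g i ∈ S := by
  classical
  simpa using hgen.dotProduct_mem (Pi.single i n)

lemma Generates.mem (hgen : Generates S g) (i : Fin ν) : g i ∈ S := by
  simpa using hgen.mul_mem 1 i

lemma MinimalGen.ne_zero (hgen : MinimalGen S g) (i : Fin ν) : g i ≠ 0 :=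
  fun hi => hgen.2 i ⟨0, rfl, by simp [hi]⟩

lemma sum_le_ordS_dotProduct (hS : IsNumSgp S) (hgen : Generates S g) (hg : ∀ i, g i ≠ 0)
    (lam : Fin ν → ℕ) : ∑ i, lam i ≤ ordS S (lam ⬝ᵥ g) :=
  calc ∑ i, lam i ≤ ∑ i, ordS S (lam i * g i) :=
        sum_le_sum fun i _ => le_ordS_mul (hgen.mem i) (hg i) (lam i)
    _ ≤ ordS S (lam ⬝ᵥ g) :=
        sum_ordS_le_ordS_sum hS univ fun i => hgen.mul_mem (lam i) i

lemma exists_isMaxRep (hS : IsNumSgp S) (hgen : Generates S g) (hg : ∀ i, g i ≠ 0)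
    (hs : s ∈ S) : ∃ lam, IsMaxRep S g lam s := by
  obtain ⟨f, hf, hfs⟩ := ordS_mem_ordSet hs
  choose c hc using fun j => (hgen (f j)).1 (hf j).1
  have hrep : (∑ j, c j) ⬝ᵥ g = s := by
    rw [sum_dotProduct]
    exact (sum_congr rfl fun j _ => hc j).trans hfs
  have hpos : ∀ j, 1 ≤ ∑ i, c j i := fun j => by
    by_contra! h0
    have hzero : ∀ i, c j i = 0 := by simpa [sum_eq_zero_iff] using h0
    exact (hf j).2 (by simpa [hzero] using (hc j).symm)
  refine ⟨∑ j, c j, hrep, le_antisymm ?_ ?_⟩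
  · simpa only [hrep] using sum_le_ordS_dotProduct hS hgen hg (∑ j, c j)
  · calc ordS S s = ∑ _j : Fin (ordS S s), 1 := by simp
      _ ≤ ∑ j, ∑ i, c j i := sum_le_sum fun j _ => hpos j
      _ = ∑ i, (∑ j, c j) i := by rw [sum_comm]; simp only [Finset.sum_apply]

lemma IsMaxRep.of_le (hS : IsNumSgp S) (hgen : Generates S g) (hg : ∀ i, g i ≠ 0)
    (h : IsMaxRep S g lam s) (hle : tau ≤ lam) : IsMaxRep S g tau (tau ⬝ᵥ g) := by
  refine ⟨rfl, le_antisymm (sum_le_ordS_dotProduct hS hgen hg tau) ?_⟩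
  have hsplit : tau + (lam - tau) = lam := add_tsub_cancel_of_le hle
  have hrep : tau ⬝ᵥ g + (lam - tau) ⬝ᵥ g = s := by rw [← add_dotProduct, hsplit]; exact h.1
  have hsum : ∑ i, tau i + ∑ i, (lam - tau) i = ∑ i, lam i := by
    rw [← sum_add_distrib]; simp only [← Pi.add_apply, hsplit]
  have hsuper := ordS_add_ordS_le (hgen.dotProduct_mem tau) (hgen.dotProduct_mem (lam - tau))
  have hrest := sum_le_ordS_dotProduct hS hgen hg (lam - tau)
  rw [hrep, ← h.2] at hsuper
  omega

end generators

section apery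

variable {S : Set ℕ} {m a b s t : ℕ}

lemma IsNumSgp.mul_mem (hS : IsNumSgp S) (ha : a ∈ S) (k : ℕ) : k * a ∈ S := by
  induction k with
  | zero => simpa using hS.1
  | succ k ih => simpa [add_mul] using hS.2.1 _ ih _ ha

lemma IsNumSgp.exists_mem_mod_eq (hS : IsNumSgp S) (hm : 0 < m) (r : ℕ) :
    ∃ s, s ∈ S ∧ s % m = r % m := by
  obtain ⟨N, hN⟩ := hS.2.2.bddAbove
  refine ⟨r + m * (N + 1), by_contra fun h => ?_, by simp⟩
  have := hN h
  have := Nat.le_mul_of_pos_left (N + 1) hm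
  omega

lemma InApery.of_add (hS : IsNumSgp S) (h : InApery S m (a + b)) (ha : a ∈ S) (hb : b ∈ S) :
    InApery S m a :=
  ⟨ha, fun u hu hum => h.2 (u + b) (hS.2.1 u hu b hb) (by omega)⟩

lemma InApery.eq_of_mod_eq (hS : IsNumSgp S) (hmS : m ∈ S) (hs : InApery S m s)
    (ht : InApery S m t) (h : s % m = t % m) : s = t := by
  wlog hst : s ≤ t generalizing s t
  · exact (this ht hs h.symm (le_of_not_ge hst)).symm
  obtain ⟨k, hk⟩ := (Nat.modEq_iff_dvd' hst).1 h
  rcases k with _ | k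
  · omega
  · refine absurd ?_ (ht.2 (s + k * m) (hS.2.1 _ hs.1 _ (hS.mul_mem hmS k)))
    rw [mul_add, mul_comm] at hk
    omega

lemma aperySet_finite (hS : IsNumSgp S) (m : ℕ) : (AperySet S m).Finite := by
  refine ((Set.finite_Iio m).union (hS.2.2.image (· + m))).subset fun s hs => ?_
  by_cases h : s < m
  · exact Or.inl h
  · exact Or.inr ⟨s - m, fun hsm => hs.2 _ hsm (by omega), by simp only; omega⟩

lemma ncard_aperySet (hS : IsNumSgp S) (hm : 0 < m) (hmS : m ∈ S) :
    (AperySet S m).ncard = m := by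
  classical
  have hinj : Set.InjOn (· % m) (AperySet S m) := fun s hs t ht => hs.eq_of_mod_eq hS hmS ht
  have himage : (· % m) '' AperySet S m = Set.Iio m := by
    refine Set.Subset.antisymm (Set.image_subset_iff.2 fun s _ => Nat.mod_lt s hm) fun r hr => ?_
    have hex := hS.exists_mem_mod_eq hm r
    obtain ⟨hmem, hmod⟩ := Nat.find_spec hex
    refine ⟨Nat.find hex, ⟨hmem, fun u hu hum => ?_⟩, by simpa [Nat.mod_eq_of_lt hr] using hmod⟩
    refine Nat.find_min hex (by omega : u < Nat.find hex) ⟨hu, ?_⟩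
    rw [← hmod, ← hum, Nat.add_mod_right]
  rw [← hinj.ncard_image, himage, Set.ncard_Iio_nat]

end apery

lemma Pi.single_le_of_le_apply {ι M : Type*} [DecidableEq ι] [AddCommMonoid M] [PartialOrder M]
    [CanonicallyOrderedAdd M] {x : ι → M} {i : ι} {a : M} (h : a ≤ x i) : Pi.single i a ≤ x :=
  fun j => by rcases eq_or_ne j i with rfl | hj <;> simp [*]

section beta

variable {S : Set ℕ} {ν : ℕ} {g : Fin ν → ℕ} {m h s : ℕ} {lam mu : Fin ν → ℕ}

lemma le_betaN_of_inApery (hS : IsNumSgp S) {i : Fin ν} (hap : InApery S m (h * g i))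
    (hord : ordS S (h * g i) = h) : h ≤ betaN S m g i := by
  obtain ⟨C, hC⟩ := (aperySet_finite hS m).bddAbove
  refine le_csSup ⟨C, fun k hk => ?_⟩ ⟨hap, hord⟩
  calc k = ordS S (k * g i) := hk.2.symm
    _ ≤ k * g i := ordS_le S _
    _ ≤ C := hC hk.1

lemma InApery.coeff_eq_zero (hgen : Generates S g) {i : Fin ν}
    (hs : InApery S (g i) (lam ⬝ᵥ g)) : lam i = 0 := by
  classical
  by_contra hi
  have hsplit : lam - Pi.single i 1 + Pi.single i 1 = lam :=
    tsub_add_cancel_of_le (Pi.single_le_of_le_apply (Nat.one_le_iff_ne_zero.2 hi))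
  refine hs.2 _ (hgen.dotProduct_mem (lam - Pi.single i 1)) ?_
  conv_rhs => rw [← hsplit, add_dotProduct, single_dotProduct, one_mul]

lemma IsMaxRep.le_betaN (hS : IsNumSgp S) (hgen : Generates S g) (hg : ∀ i, g i ≠ 0)
    (hs : InApery S m s) (h : IsMaxRep S g lam s) (i : Fin ν) : lam i ≤ betaN S m g i := by
  classical
  have hle : Pi.single i (lam i) ≤ lam := Pi.single_le_of_le_apply le_rfl
  have hmax := h.of_le hS hgen hg hle
  have hsplit : Pi.single i (lam i) ⬝ᵥ g + (lam - Pi.single i (lam i)) ⬝ᵥ g = s := by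
    rw [← add_dotProduct, add_tsub_cancel_of_le hle]
    exact h.1
  have hap : InApery S m (Pi.single i (lam i) ⬝ᵥ g) :=
    (hsplit ▸ hs).of_add hS (hgen.dotProduct_mem _) (hgen.dotProduct_mem _)
  rw [single_dotProduct] at hmax hap
  exact le_betaN_of_inApery hS hap (by simpa using hmax.2.symm)

variable [NeZero ν]

noncomputable def betaCorner (S : Set ℕ) (m : ℕ) (g : Fin ν → ℕ) : Fin ν → ℕ :=
  Function.update (betaN S m g) 0 0

lemma le_betaCorner_iff :
    lam ≤ betaCorner S m g ↔ lam 0 = 0 ∧ ∀ i, lam i ≤ betaN S m g i := by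
  rw [betaCorner, le_update_iff, Nat.le_zero]
  refine and_congr_right fun h0 => ⟨fun h i => ?_, fun h j _ => h j⟩
  rcases eq_or_ne i 0 with rfl | hi
  · exact h0.symm ▸ Nat.zero_le _
  · exact h i hi

lemma Bset_eq_image : Bset S m g = (· ⬝ᵥ g) '' Set.Iic (betaCorner S m g) := by
  ext s
  simp only [Bset, Set.mem_image, Set.mem_Iic, le_betaCorner_iff, and_assoc]
  rfl

lemma ncard_Iic_betaCorner :
    (Set.Iic (betaCorner S m g)).ncard = ∏ i ∈ univ.erase 0, (betaN S m g i + 1) := by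
  rw [← Finset.coe_Iic, Set.ncard_coe_finset, Pi.card_Iic, ← mul_prod_erase _ _ (mem_univ 0)]
  simp only [betaCorner, Function.update_self, Nat.card_Iic, zero_add, one_mul]
  exact prod_congr rfl fun i hi => by rw [Function.update_of_ne (ne_of_mem_erase hi)]

lemma Bset_finite : (Bset S m g).Finite := by
  rw [Bset_eq_image]
  exact (Set.finite_Iic _).image _

lemma ncard_Bset_le : (Bset S m g).ncard ≤ ∏ i ∈ univ.erase 0, (betaN S m g i + 1) := by
  rw [Bset_eq_image, ← ncard_Iic_betaCorner]
  exact Set.ncard_image_le (Set.finite_Iic _)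

lemma IsMaxRep.le_betaCorner (hS : IsNumSgp S) (hgen : Generates S g) (hg : ∀ i, g i ≠ 0)
    (hs : InApery S (g 0) s) (h : IsMaxRep S g lam s) : lam ≤ betaCorner S (g 0) g :=
  le_betaCorner_iff.2 ⟨(h.1 ▸ hs).coeff_eq_zero hgen, h.le_betaN hS hgen hg hs⟩

lemma aperySet_subset_Bset (hS : IsNumSgp S) (hgen : Generates S g) (hg : ∀ i, g i ≠ 0) :
    AperySet S (g 0) ⊆ Bset S (g 0) g := fun s hs => by
  obtain ⟨lam, h⟩ := exists_isMaxRep hS hgen hg hs.1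
  rw [Bset_eq_image]
  exact ⟨lam, h.le_betaCorner hS hgen hg hs, h.1⟩

lemma inApery_of_le_betaCorner (hAB : AperySet S (g 0) = Bset S (g 0) g)
    (hlam : lam ≤ betaCorner S (g 0) g) : InApery S (g 0) (lam ⬝ᵥ g) := by
  change lam ⬝ᵥ g ∈ AperySet S (g 0)
  rw [hAB, Bset_eq_image]
  exact ⟨lam, hlam, rfl⟩

lemma isMaxRep_of_le_betaCorner (hS : IsNumSgp S) (hgen : Generates S g) (hg : ∀ i, g i ≠ 0)
    (hAB : AperySet S (g 0) = Bset S (g 0) g) (hlam : lam ≤ betaCorner S (g 0) g) :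
    IsMaxRep S g lam (lam ⬝ᵥ g) := by
  set c := betaCorner S (g 0) g
  have hc : InApery S (g 0) (c ⬝ᵥ g) := inApery_of_le_betaCorner hAB le_rfl
  obtain ⟨mu, hmu⟩ := exists_isMaxRep hS hgen hg hc.1
  have hcmax : IsMaxRep S g c (c ⬝ᵥ g) := by
    refine ⟨rfl, le_antisymm (sum_le_ordS_dotProduct hS hgen hg c) ?_⟩
    rw [← hmu.2]
    exact sum_le_sum fun i _ => hmu.le_betaCorner hS hgen hg hc i
  exact hcmax.of_le hS hgen hg hlam

lemma le_of_dotProduct_eq (hS : IsNumSgp S) (hgen : Generates S g) (hg : ∀ i, g i ≠ 0)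
    (hAB : AperySet S (g 0) = Bset S (g 0) g) (hlam : lam ≤ betaCorner S (g 0) g)
    (hmu : mu ≤ betaCorner S (g 0) g) (heq : lam ⬝ᵥ g = mu ⬝ᵥ g) : mu ≤ lam := by
  classical
  intro i
  by_contra! hlt
  obtain ⟨hlam0, hlamβ⟩ := le_betaCorner_iff.1 hlam
  have hi : i ≠ 0 := by
    rintro rfl
    rw [hlam0, (le_betaCorner_iff.1 hmu).1] at hlt
    exact lt_irrefl 0 hlt
  have hcorner : betaCorner S (g 0) g i = betaN S (g 0) g i := Function.update_of_ne hi _ _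
  obtain ⟨d, hd⟩ : ∃ d, lam i + d = betaN S (g 0) g i := ⟨_, Nat.add_sub_of_le (hlamβ i)⟩
  set rho := lam + Pi.single i d
  set sigma := mu + Pi.single i d
  have hrho : rho ≤ betaCorner S (g 0) g := fun j => by
    rcases eq_or_ne j i with rfl | hj
    · simp only [rho, Pi.add_apply, Pi.single_eq_same, hcorner, hd, le_rfl]
    · simpa [rho, hj] using hlam j
  have hsum : ∑ j, lam j = ∑ j, mu j := by
    rw [(isMaxRep_of_le_betaCorner hS hgen hg hAB hlam).2, heq,
      (isMaxRep_of_le_betaCorner hS hgen hg hAB hmu).2]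
  have hsigma : IsMaxRep S g sigma (rho ⬝ᵥ g) := by
    refine ⟨show sigma ⬝ᵥ g = rho ⬝ᵥ g by simp only [sigma, rho, add_dotProduct, heq], ?_⟩
    rw [← (isMaxRep_of_le_betaCorner hS hgen hg hAB hrho).2]
    simp only [sigma, rho, Pi.add_apply, sum_add_distrib, hsum]
  have hsigma_i := hsigma.le_betaCorner hS hgen hg (inApery_of_le_betaCorner hAB hrho) i
  simp only [sigma, Pi.add_apply, Pi.single_eq_same, hcorner, ← hd] at hsigma_i
  exact hlt.not_ge (Nat.le_of_add_le_add_right hsigma_i)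

lemma injOn_Iic_betaCorner (hS : IsNumSgp S) (hgen : Generates S g) (hg : ∀ i, g i ≠ 0)
    (hAB : AperySet S (g 0) = Bset S (g 0) g) :
    Set.InjOn (· ⬝ᵥ g) (Set.Iic (betaCorner S (g 0) g)) := fun _ hx _ hy hxy =>
  le_antisymm (le_of_dotProduct_eq hS hgen hg hAB hy hx hxy.symm)
    (le_of_dotProduct_eq hS hgen hg hAB hx hy hxy)

end beta

theorem betaRect_iff_mult_eq_prod_general (S : Set ℕ) {ν : ℕ} [NeZero ν] (g : Fin ν → ℕ)
    (hS : IsNumSgp S) (hgen : MinimalGen S g) :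
    AperySet S (g 0) = Bset S (g 0) g ↔
      g 0 = ∏ i ∈ Finset.univ.erase 0, (betaN S (g 0) g i + 1) := by
  have hg := hgen.ne_zero
  have hcard : (AperySet S (g 0)).ncard = g 0 :=
    ncard_aperySet hS (Nat.pos_of_ne_zero (hg 0)) (hgen.1.mem 0)
  constructor
  · intro hAB
    rw [← ncard_Iic_betaCorner, ← (injOn_Iic_betaCorner hS hgen.1 hg hAB).ncard_image,
      ← Bset_eq_image, ← hAB, hcard]
  · intro hprod
    refine Set.eq_of_subset_of_ncard_le (aperySet_subset_Bset hS hgen.1 hg) ?_ Bset_finite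
    exact (ncard_Bset_le.trans_eq hprod.symm).trans_eq hcard.symm

theorem betaRect_iff_mult_eq_prod (S : Set ℕ) {ν : ℕ} [NeZero ν] (g : Fin ν → ℕ) (hν : 2 ≤ ν)
    (hS : IsNumSgp S) (hgen : MinimalGen S g) (hmono : StrictMono g)
    (hmpos : 0 < g 0) (hmul : ∀ s ∈ S, s ≠ 0 → g 0 ≤ s) :
    AperySet S (g 0) = Bset S (g 0) g ↔
      g 0 = ∏ i ∈ Finset.univ.erase 0, (betaN S (g 0) g i + 1) :=
  betaRect_iff_mult_eq_prod_general S g hS hgen
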